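/- Let τ_M > 0, τ_T > 0, a_M, a_T ∈ ℝ, t₀ ≤ t_f, and let u_T : ℝ → ℝ be continuous with u_T(s) ≤ a_T for all s ∈ [t₀, t_f]. If Z : ℝ → ℝ satisfies Z′(s) = −τ_M·Ψ((t_f−s)/τ_M)·a_M + τ_T·Ψ((t_f−s)/τ_T)·u_T(s) on [t₀, t_f] (the pursuer applies the constant command u_M = a_M), then the terminal ZEM satisfies Z(t_f) ≤ Z(t₀) − ∂Z*(t_f − t₀). -/

import Mathlib

/-- Ψ(θ) = exp(−θ) + θ − 1 -/
noncomputable def Psi (θ : ℝ) : ℝ := Real.exp (-θ) + θ - 1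

/-- Υ(θ) = θ²/2 − exp(−θ) − θ + 1 -/
noncomputable def Upsilon (θ : ℝ) : ℝ := θ ^ 2 / 2 - Real.exp (-θ) - θ + 1

/-- The singular-region boundary ∂Z*(s) = a_M·τ_M²·Υ(s/τ_M) − a_T·τ_T²·Υ(s/τ_T). -/
noncomputable def singBdry (aM aT τM τT s : ℝ) : ℝ :=
  aM * τM ^ 2 * Upsilon (s / τM) - aT * τT ^ 2 * Upsilon (s / τT)

/-!
The function `s ↦ ∂Z*(t_f − s)` solves the ZEM equation for the extreme commands
`u_M = a_M`, `u_T = a_T`, and vanishes at `s = t_f`. Since `Ψ ≥ 0` and `u_T ≤ a_T`, the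
derivative of `Z` is pointwise at most that of `s ↦ ∂Z*(t_f − s)`, so the increment of `Z`
over `[t₀, t_f]` is at most `0 − ∂Z*(t_f − t₀)`.
-/

open Set

lemma Psi_nonneg (θ : ℝ) : 0 ≤ Psi θ := by
  have := Real.add_one_le_exp (-θ)
  unfold Psi
  linarith

lemma Upsilon_zero : Upsilon 0 = 0 := by
  simp [Upsilon]

lemma singBdry_zero (aM aT τM τT : ℝ) : singBdry aM aT τM τT 0 = 0 := by
  simp [singBdry, Upsilon_zero]

lemma hasDerivAt_Upsilon (θ : ℝ) : HasDerivAt Upsilon (Psi θ) θ := by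
  have h := ((((hasDerivAt_pow 2 θ).div_const 2).sub (hasDerivAt_neg θ).exp).sub
    (hasDerivAt_id θ)).add_const 1
  refine h.congr_deriv ?_
  simp only [Psi]
  ring

lemma hasDerivAt_sq_mul_Upsilon_div {τ : ℝ} (hτ : τ ≠ 0) (c s : ℝ) :
    HasDerivAt (fun s => τ ^ 2 * Upsilon ((c - s) / τ)) (-τ * Psi ((c - s) / τ)) s := by
  have h := ((hasDerivAt_Upsilon _).comp s
    (((hasDerivAt_id' s).const_sub c).div_const τ)).const_mul (τ ^ 2)
  refine h.congr_deriv ?_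
  field_simp

lemma hasDerivAt_singBdry_sub {τM τT : ℝ} (hτM : τM ≠ 0) (hτT : τT ≠ 0) (aM aT tf s : ℝ) :
    HasDerivAt (fun s => singBdry aM aT τM τT (tf - s))
      (-τM * Psi ((tf - s) / τM) * aM + τT * Psi ((tf - s) / τT) * aT) s := by
  have h := ((hasDerivAt_sq_mul_Upsilon_div hτM tf s).const_mul aM).sub
    ((hasDerivAt_sq_mul_Upsilon_div hτT tf s).const_mul aT)
  have hfun : (fun s => singBdry aM aT τM τT (tf - s)) =
      (fun s => aM * (τM ^ 2 * Upsilon ((tf - s) / τM))) -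
        fun s => aT * (τT ^ 2 * Upsilon ((tf - s) / τT)) := by
    ext s
    simp only [singBdry, Pi.sub_apply]
    ring
  rw [hfun]
  exact h.congr_deriv (by ring)

lemma sub_le_sub_of_hasDerivAt_le {f g f' g' : ℝ → ℝ} {a b : ℝ} (hab : a ≤ b)
    (hf : ∀ s ∈ Icc a b, HasDerivAt f (f' s) s) (hg : ∀ s ∈ Icc a b, HasDerivAt g (g' s) s)
    (hle : ∀ s ∈ Icc a b, f' s ≤ g' s) : f b - f a ≤ g b - g a := by
  have hderiv : ∀ s ∈ Icc a b, HasDerivAt (g - f) (g' s - f' s) s :=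
    fun s hs => (hg s hs).sub (hf s hs)
  have hmono : MonotoneOn (g - f) (Icc a b) := by
    refine monotoneOn_of_hasDerivWithinAt_nonneg (convex_Icc a b)
      (fun s hs => (hderiv s hs).continuousAt.continuousWithinAt)
      (fun s hs => (hderiv s (interior_subset hs)).hasDerivWithinAt)
      (fun s hs => sub_nonneg.mpr (hle s (interior_subset hs)))
  have := hmono (left_mem_Icc.mpr hab) (right_mem_Icc.mpr hab) hab
  simp only [Pi.sub_apply] at this
  linarith

theorem terminal_zem_upper_bound_max_pursuer_general
    (τM τT aM aT tf t₀ : ℝ) (hτM : 0 < τM) (hτT : 0 < τT) (ht : t₀ ≤ tf)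
    (uT : ℝ → ℝ)
    (huT : ∀ s ∈ Set.Icc t₀ tf, uT s ≤ aT)
    (Z : ℝ → ℝ)
    (hZ : ∀ s ∈ Set.Icc t₀ tf,
      HasDerivAt Z (-τM * Psi ((tf - s) / τM) * aM + τT * Psi ((tf - s) / τT) * uT s) s) :
    Z tf ≤ Z t₀ - singBdry aM aT τM τT (tf - t₀) := by
  have hle := sub_le_sub_of_hasDerivAt_le ht hZ
    (fun s _ => hasDerivAt_singBdry_sub hτM.ne' hτT.ne' aM aT tf s)
    (fun s hs => add_le_add_right
      (mul_le_mul_of_nonneg_left (huT s hs) (mul_nonneg hτT.le (Psi_nonneg _))) _)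
  rw [sub_self, singBdry_zero] at hle
  linarith

/-- If the pursuer applies the constant command u_M = a_M while the target applies any
continuous command u_T with u_T(s) ≤ a_T, then the terminal ZEM satisfies
Z(t_f) ≤ Z(t₀) − ∂Z*(t_f − t₀). -/
theorem terminal_zem_upper_bound_max_pursuer
    (τM τT aM aT tf t₀ : ℝ) (hτM : 0 < τM) (hτT : 0 < τT) (ht : t₀ ≤ tf)
    (uT : ℝ → ℝ) (huTc : ContinuousOn uT (Set.Icc t₀ tf))
    (huT : ∀ s ∈ Set.Icc t₀ tf, uT s ≤ aT)
    (Z : ℝ → ℝ)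
    (hZ : ∀ s ∈ Set.Icc t₀ tf,
      HasDerivAt Z (-τM * Psi ((tf - s) / τM) * aM + τT * Psi ((tf - s) / τT) * uT s) s) :
    Z tf ≤ Z t₀ - singBdry aM aT τM τT (tf - t₀) :=
  terminal_zem_upper_bound_max_pursuer_general τM τT aM aT tf t₀ hτM hτT ht uT huT Z hZ
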